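/- Let R = k[[x,y]]/(xy) and M = R/(x). Then M ⊗_R Hom_R(M,R) ≅ M and M is not free, so R fails the Huneke–Wiegand condition (HWC): M is a torsion-free module with M ⊗_R M* reflexive yet M not free. -/

import Mathlib

set_option maxHeartbeats 1000000
set_option synthInstance.maxHeartbeats 1000000

/-! The images of `x` and `y` form an exact pair of zero divisors in `R`: `ann x = (y)` and
`ann y = (x)`. For such a pair, `(r̄, s̄) ↦ r s y` is a symmetric perfect pairing on `M = R/(x)`, so
`M ≅ M*` and `M` is reflexive, hence torsion-free; moreover `M ⊗ M* ≅ M ⊗ R/(x) ≅ M/xM = M`.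
Finally `M ≠ 0` is killed by `x ≠ 0`, so it is not free. -/

/-- The hypersurface `R = k[[x,y]]/(xy)`. -/
noncomputable abbrev R19 (k : Type) [Field k] :=
  MvPowerSeries (Fin 2) k ⧸
    Ideal.span {(MvPowerSeries.X 0 : MvPowerSeries (Fin 2) k) * MvPowerSeries.X 1}

/-- The image of `x` in `R = k[[x,y]]/(xy)`. -/
noncomputable abbrev xR19 (k : Type) [Field k] : R19 k :=
  Ideal.Quotient.mk _ (MvPowerSeries.X 0)

open Module TensorProduct

/-- An exact pair of zero divisors: `ann a = (b)` and `ann b = (a)`. -/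
structure IsExactPair {A : Type*} [CommRing A] (a b : A) : Prop where
  mul_eq_zero : a * b = 0
  dvd_of_mul_left_eq_zero : ∀ r, r * a = 0 → b ∣ r
  dvd_of_mul_right_eq_zero : ∀ r, r * b = 0 → a ∣ r

theorem Submodule.torsion_eq_bot_of_isTorsionFree {R M : Type*} [CommRing R] [AddCommGroup M]
    [Module R M] [IsTorsionFree R M] : torsion R M = ⊥ := by
  refine eq_bot_iff.2 fun m ⟨r, hr⟩ => ?_
  exact (isRegular_iff_mem_nonZeroDivisors.2 r.2).smul_eq_zero_iff_right.1 hr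

theorem Ideal.Quotient.smul_top_eq_bot {A : Type*} [CommRing A] (I : Ideal A) :
    (I • ⊤ : Submodule A (A ⧸ I)) = ⊥ := by
  refine eq_bot_iff.2 (Submodule.smul_le.2 fun r hr m _ => ?_)
  obtain ⟨s, rfl⟩ := Ideal.Quotient.mk_surjective m
  rw [Submodule.mem_bot, Algebra.smul_def, Ideal.Quotient.algebraMap_eq, ← map_mul,
    Ideal.Quotient.eq_zero_iff_mem]
  exact I.mul_mem_right s hr

theorem not_free_quot_span_singleton {A : Type*} [CommRing A] {a : A} (ha : a ≠ 0)
    (hu : ¬IsUnit a) : ¬Free A (A ⧸ Ideal.span {a}) := by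
  intro _
  have : Nontrivial (A ⧸ Ideal.span {a}) :=
    Ideal.Quotient.nontrivial_iff.2 (by rwa [Ne, Ideal.span_singleton_eq_top])
  refine ha (eq_of_smul_eq_smul (α := A ⧸ Ideal.span {a}) fun m => ?_)
  rw [zero_smul]
  have hm : a • m ∈ (Ideal.span {a} • ⊤ : Submodule A (A ⧸ Ideal.span {a})) :=
    Submodule.smul_mem_smul (Ideal.mem_span_singleton_self a) Submodule.mem_top
  rwa [Ideal.Quotient.smul_top_eq_bot, Submodule.mem_bot] at hm

section Pairing

variable {A : Type*} [CommRing A] {a b : A}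

noncomputable def quotSpanPairing (hab : a * b = 0) :
    (A ⧸ Ideal.span {a}) →ₗ[A] (A ⧸ Ideal.span {a}) →ₗ[A] A :=
  (LinearMap.mul A (A ⧸ Ideal.span {a})).compr₂ <|
    Submodule.liftQ _ (LinearMap.toSpanSingleton A A b) <| by
      intro r hr
      obtain ⟨c, rfl⟩ := Ideal.mem_span_singleton'.1 hr
      simp [mul_assoc, hab]

@[simp]
theorem quotSpanPairing_mk_mk (hab : a * b = 0) (r s : A) :
    quotSpanPairing hab (Ideal.Quotient.mk _ r) (Ideal.Quotient.mk _ s) = r * s * b :=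
  rfl

theorem quotSpanPairing_flip (hab : a * b = 0) :
    (quotSpanPairing hab).flip = quotSpanPairing hab := by
  refine LinearMap.ext₂ fun m n => ?_
  simp only [quotSpanPairing, LinearMap.flip_apply, LinearMap.compr₂_apply, LinearMap.mul_apply',
    mul_comm]

end Pairing

namespace IsExactPair

variable {A : Type*} [CommRing A] {a b : A}

theorem not_isUnit (h : IsExactPair a b) (hb : b ≠ 0) : ¬IsUnit a :=
  fun hu => hb (hu.mul_right_eq_zero.1 h.mul_eq_zero)

theorem bijective_quotSpanPairing (h : IsExactPair a b) :
    Function.Bijective (quotSpanPairing h.mul_eq_zero) := by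
  have mk_eq_smul_one (s : A) : Ideal.Quotient.mk (Ideal.span {a}) s = s • 1 := by
    rw [← Ideal.Quotient.algebraMap_eq, Algebra.algebraMap_eq_smul_one]
  constructor
  · refine (injective_iff_map_eq_zero _).2 fun m hm => ?_
    obtain ⟨r, rfl⟩ := Ideal.Quotient.mk_surjective m
    have hrb := LinearMap.congr_fun hm (Ideal.Quotient.mk _ 1)
    rw [quotSpanPairing_mk_mk, mul_one, LinearMap.zero_apply] at hrb
    rw [Ideal.Quotient.eq_zero_iff_mem, Ideal.mem_span_singleton]
    exact h.dvd_of_mul_right_eq_zero r hrb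
  · intro φ
    have hφa : φ 1 * a = 0 := by
      have ha : Ideal.Quotient.mk (Ideal.span {a}) a = 0 :=
        Ideal.Quotient.eq_zero_iff_mem.2 (Ideal.mem_span_singleton_self a)
      rw [mul_comm, ← smul_eq_mul, ← map_smul, ← mk_eq_smul_one, ha, map_zero]
    obtain ⟨g, hg⟩ := h.dvd_of_mul_left_eq_zero _ hφa
    refine ⟨Ideal.Quotient.mk _ g, LinearMap.ext fun m => ?_⟩
    obtain ⟨s, rfl⟩ := Ideal.Quotient.mk_surjective m
    rw [quotSpanPairing_mk_mk, mk_eq_smul_one s, map_smul, smul_eq_mul, hg]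
    ring

theorem isPerfPair (h : IsExactPair a b) : (quotSpanPairing h.mul_eq_zero).IsPerfPair :=
  ⟨h.bijective_quotSpanPairing, quotSpanPairing_flip h.mul_eq_zero ▸ h.bijective_quotSpanPairing⟩

theorem isReflexive (h : IsExactPair a b) : IsReflexive A (A ⧸ Ideal.span {a}) :=
  have := h.isPerfPair
  .of_isPerfPair (quotSpanPairing h.mul_eq_zero)

noncomputable def dualEquiv (h : IsExactPair a b) :
    (A ⧸ Ideal.span {a}) ≃ₗ[A] Dual A (A ⧸ Ideal.span {a}) :=
  have := h.isPerfPair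
  (quotSpanPairing h.mul_eq_zero).toPerfPair

noncomputable def tensorDualEquiv (h : IsExactPair a b) :
    (A ⧸ Ideal.span {a}) ⊗[A] Dual A (A ⧸ Ideal.span {a}) ≃ₗ[A] A ⧸ Ideal.span {a} :=
  TensorProduct.congr (.refl _ _) h.dualEquiv.symm ≪≫ₗ
    TensorProduct.tensorQuotEquivQuotSMul _ _ ≪≫ₗ
    Submodule.quotEquivOfEqBot _ (Ideal.Quotient.smul_top_eq_bot _)

end IsExactPair

section ProductQuotient

variable {P : Type*} [CommRing P] [NoZeroDivisors P] {c d : P} {I : Ideal P}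

/- The ideal is passed through `hI` so that these lemmas also serve for the quotient by
`span {d * c}`, which is a different type. -/

theorem Ideal.Quotient.mk_dvd_of_mul_mk_eq_zero (hI : I = Ideal.span {c * d}) (hc : c ≠ 0)
    {r : P ⧸ I} (h : r * Ideal.Quotient.mk I c = 0) : Ideal.Quotient.mk I d ∣ r := by
  obtain ⟨s, rfl⟩ := Ideal.Quotient.mk_surjective r
  rw [← map_mul, Ideal.Quotient.eq_zero_iff_mem, hI, Ideal.mem_span_singleton] at h
  obtain ⟨t, ht⟩ := h
  have hs : s = d * t := mul_right_cancel₀ hc (by rw [ht]; ring)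
  exact ⟨Ideal.Quotient.mk I t, by rw [hs, map_mul]⟩

theorem Ideal.Quotient.mk_ne_zero_of_not_isUnit (hI : I = Ideal.span {c * d}) (hc : c ≠ 0)
    (hd : ¬IsUnit d) : Ideal.Quotient.mk I c ≠ 0 := by
  rw [Ne, Ideal.Quotient.eq_zero_iff_mem, hI, Ideal.mem_span_singleton]
  rintro ⟨t, ht⟩
  exact hd (IsUnit.of_mul_eq_one t (mul_left_cancel₀ hc (by rw [mul_one, ← mul_assoc, ← ht])).symm)

theorem Ideal.Quotient.isExactPair_mk (hc : c ≠ 0) (hd : d ≠ 0) :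
    IsExactPair (Ideal.Quotient.mk (Ideal.span {c * d}) c) (Ideal.Quotient.mk _ d) where
  mul_eq_zero := by
    rw [← map_mul, Ideal.Quotient.eq_zero_iff_mem]
    exact Ideal.mem_span_singleton_self _
  dvd_of_mul_left_eq_zero _ := mk_dvd_of_mul_mk_eq_zero rfl hc
  dvd_of_mul_right_eq_zero _ := mk_dvd_of_mul_mk_eq_zero (by rw [mul_comm]) hd

end ProductQuotient

/-- For `R = k[[x,y]]/(xy)` and `M = R/(x)`: `M ⊗_R M* ≅ M`, `M` is torsion-free,
`M ⊗_R M*` is reflexive, and yet `M` is not free; so `R` fails the Huneke–Wiegand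
condition (HWC). -/
theorem stmt19 (k : Type) [Field k] :
    Nonempty ((TensorProduct (R19 k) (R19 k ⧸ Ideal.span {xR19 k})
        (Module.Dual (R19 k) (R19 k ⧸ Ideal.span {xR19 k})))
      ≃ₗ[R19 k] (R19 k ⧸ Ideal.span {xR19 k})) ∧
    Submodule.torsion (R19 k) (R19 k ⧸ Ideal.span {xR19 k}) = ⊥ ∧
    Function.Bijective (Module.Dual.eval (R19 k)
      (TensorProduct (R19 k) (R19 k ⧸ Ideal.span {xR19 k})
        (Module.Dual (R19 k) (R19 k ⧸ Ideal.span {xR19 k})))) ∧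
    ¬ Module.Free (R19 k) (R19 k ⧸ Ideal.span {xR19 k}) := by
  have hX (i : Fin 2) : (MvPowerSeries.X i : MvPowerSeries (Fin 2) k) ≠ 0 ∧
      ¬IsUnit (MvPowerSeries.X i : MvPowerSeries (Fin 2) k) :=
    ⟨nonZeroDivisors.ne_zero MvPowerSeries.X_mem_nonzeroDivisors, by
      simp [MvPowerSeries.isUnit_iff_constantCoeff]⟩
  have h : IsExactPair (xR19 k) (Ideal.Quotient.mk _ (MvPowerSeries.X 1)) :=
    Ideal.Quotient.isExactPair_mk (hX 0).1 (hX 1).1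
  have hx : xR19 k ≠ 0 := Ideal.Quotient.mk_ne_zero_of_not_isUnit rfl (hX 0).1 (hX 1).2
  have hy : (Ideal.Quotient.mk _ (MvPowerSeries.X 1) : R19 k) ≠ 0 :=
    Ideal.Quotient.mk_ne_zero_of_not_isUnit (by rw [mul_comm]) (hX 1).1 (hX 0).2
  have := h.isReflexive
  have := Module.equiv h.tensorDualEquiv.symm
  exact ⟨⟨h.tensorDualEquiv⟩, Submodule.torsion_eq_bot_of_isTorsionFree,
    bijective_dual_eval _ _, not_free_quot_span_singleton hx (h.not_isUnit hy)⟩
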